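/- arXiv:1006.4990 — 3 statements merged into one kernel-verified Lean document; each statement's English description precedes it below -/
import Mathlib

section
/- If update functions are executed in parallel such that no two simultaneously executing functions have overlapping scopes (full consistency), then the parallel execution is sequentially consistent: there exists a sequential ordering of the same update function applications producing an identical final state. -/
/-
Updates with pairwise disjoint scopes commute: each one writes only inside its own scope, which
no other update of the same step reads. Hence running the vertices of a parallel step one after
another, in any order, reproduces the parallel step, and concatenating these lists over all
steps gives the sequential ordering.
-/

/-- Data locations of a data graph: vertex data and edge data. -/
abbrev Loc (V : Type*) := V ⊕ Sym2 V

/-- The full scope of a vertex `v`: the vertex itself, its neighbors, and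
its incident edges. -/
def scope {V : Type*} (G : SimpleGraph V) (v : V) : Set (Loc V) :=
  {l | match l with
    | Sum.inl u => u = v ∨ G.Adj u v
    | Sum.inr e => v ∈ e ∧ e ∈ G.edgeSet}

/-- One parallel step: all vertices of `S` are updated simultaneously; the state
changes on the scope of each updated vertex according to its update function, and
is unchanged elsewhere. -/
def ParStep {V D : Type*} (G : SimpleGraph V) (f : V → (Loc V → D) → (Loc V → D))
    (S : Finset V) (σ σ' : Loc V → D) : Prop :=
  (∀ v ∈ S, ∀ l ∈ scope G v, σ' l = f v σ l) ∧
  (∀ l, (∀ v ∈ S, l ∉ scope G v) → σ' l = σ l)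

/-- A parallel execution (full consistency): a sequence of parallel steps, where
within each step the simultaneously updated vertices have pairwise disjoint scopes. -/
inductive ParExec {V D : Type*} (G : SimpleGraph V)
    (f : V → (Loc V → D) → (Loc V → D)) :
    List (Finset V) → (Loc V → D) → (Loc V → D) → Prop
  | nil (σ : Loc V → D) : ParExec G f [] σ σ
  | cons {S : Finset V} {steps : List (Finset V)} {σ σ₁ σ₂ : Loc V → D} :
      (∀ u ∈ S, ∀ v ∈ S, u ≠ v → Disjoint (scope G u) (scope G v)) →
      ParStep G f S σ σ₁ → ParExec G f steps σ₁ σ₂ →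
      ParExec G f (S :: steps) σ σ₂

open Function

section Sequential

variable {ι α D : Type*} (sc : ι → Set α) {f : ι → (α → D) → (α → D)}

theorem foldl_apply_of_forall_notMem
    (hwrites : ∀ i (σ : α → D) a, a ∉ sc i → f i σ a = σ a) (L : List ι) (σ : α → D) {a : α}
    (ha : ∀ i ∈ L, a ∉ sc i) : L.foldl (fun s i => f i s) σ a = σ a := by
  induction L generalizing σ with
  | nil => rfl
  | cons i L ih =>
    rw [List.foldl_cons, ih _ fun j hj => ha j (List.mem_cons_of_mem i hj),
      hwrites i σ a (ha i List.mem_cons_self)]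

theorem foldl_apply_of_mem_scope
    (hreads : ∀ i (σ σ' : α → D), (∀ a ∈ sc i, σ a = σ' a) → ∀ a ∈ sc i, f i σ a = f i σ' a)
    (hwrites : ∀ i (σ : α → D) a, a ∉ sc i → f i σ a = σ a) {L : List ι}
    (hL : L.Pairwise (Disjoint on sc)) (σ : α → D) {i : ι} (hi : i ∈ L) {a : α}
    (ha : a ∈ sc i) : L.foldl (fun s i => f i s) σ a = f i σ a := by
  induction L generalizing σ with
  | nil => cases hi
  | cons j L ih =>
    obtain ⟨hj, hL⟩ := List.pairwise_cons.mp hL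
    rw [List.foldl_cons]
    rcases List.mem_cons.mp hi with rfl | hi
    · exact foldl_apply_of_forall_notMem sc hwrites L _ fun k hk hak =>
        Set.disjoint_left.mp (hj k hk) ha hak
    · rw [ih hL _ hi]
      refine hreads i _ _ (fun b hb => hwrites j σ b fun hb' => ?_) a ha
      exact Set.disjoint_left.mp (hj i hi) hb' hb

end Sequential

theorem foldl_eq_of_parStep {V D : Type*} {G : SimpleGraph V}
    {f : V → (Loc V → D) → (Loc V → D)}
    (hreads : ∀ v (σ σ' : Loc V → D), (∀ l ∈ scope G v, σ l = σ' l) →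
      ∀ l ∈ scope G v, f v σ l = f v σ' l)
    (hwrites : ∀ v (σ : Loc V → D) (l : Loc V), l ∉ scope G v → f v σ l = σ l)
    {S : Finset V} (hdisj : ∀ u ∈ S, ∀ v ∈ S, u ≠ v → Disjoint (scope G u) (scope G v))
    {σ σ' : Loc V → D} (hstep : ParStep G f S σ σ') :
    S.toList.foldl (fun s v => f v s) σ = σ' := by
  have hpw : S.toList.Pairwise (Disjoint on scope G) :=
    S.nodup_toList.pairwise_of_forall_ne fun u hu v hv =>
      hdisj u (Finset.mem_toList.mp hu) v (Finset.mem_toList.mp hv)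
  funext l
  by_cases hl : ∃ v ∈ S, l ∈ scope G v
  · obtain ⟨v, hv, hlv⟩ := hl
    rw [foldl_apply_of_mem_scope _ hreads hwrites hpw σ (Finset.mem_toList.mpr hv) hlv,
      hstep.1 v hv l hlv]
  · push Not at hl
    rw [foldl_apply_of_forall_notMem _ hwrites _ σ fun v hv => hl v (Finset.mem_toList.mp hv),
      hstep.2 l hl]

/-- Full consistency implies sequential consistency: if update functions read and
write only within their scope and no two simultaneously executed functions have
overlapping scopes, then there is a sequential ordering of the same update
applications producing an identical final state. -/
theorem full_consistency_sequentially_consistent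
    {V D : Type*} (G : SimpleGraph V) (f : V → (Loc V → D) → (Loc V → D))
    (hreads : ∀ v (σ σ' : Loc V → D), (∀ l ∈ scope G v, σ l = σ' l) →
      ∀ l ∈ scope G v, f v σ l = f v σ' l)
    (hwrites : ∀ v (σ : Loc V → D) (l : Loc V), l ∉ scope G v → f v σ l = σ l)
    (steps : List (Finset V)) (σ σf : Loc V → D)
    (hexec : ParExec G f steps σ σf) :
    ∃ L : List V, L.Perm (steps.flatMap Finset.toList) ∧
      L.foldl (fun s v => f v s) σ = σf := by
  induction hexec with
  | nil σ => exact ⟨[], List.Perm.nil, rfl⟩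
  | @cons S _ _ _ _ hdisj hstep _ ih =>
    obtain ⟨L, hperm, hfold⟩ := ih
    refine ⟨S.toList ++ L, List.flatMap_cons ▸ hperm.append_left S.toList, ?_⟩
    rw [List.foldl_append, foldl_eq_of_parStep hreads hwrites hdisj hstep, hfold]
end

section
/- Graham's list scheduling bound: any greedy schedule of n unit-time tasks with precedence constraints given by a DAG on p processors completes in at most T* + L steps, where L is the length of the longest chain and T* = ⌈n/p⌉; in particular the greedy makespan is at most twice the optimal makespan minus one optimal unit, i.e., at most (2 − 1/p) times optimal. -/
/-!
Walk backwards through the greedy schedule from a task finishing last, each time stepping to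
a predecessor that finishes latest. By greediness, every slot in which some processor is idle
before the current task starts must still be busy with one of its predecessors, so the chain
obtained meets every non-full slot. Hence at most `Lc` slots are non-full, each holds at least
one task, and the other slots hold `p` tasks: `p (M - c) + c ≤ n` with `c ≤ Lc`. Any valid
schedule has `n ≤ p · Mopt` and `Lc ≤ Mopt`, and the three bounds are arithmetic from there.
-/

open Finset

theorem List.IsChain.length_le_card_of_lt {α β : Type*} [Preorder β] {r : α → α → Prop}
    {f : α → β} {l : List α} (hl : l.IsChain r) (hf : ∀ a b, r a b → f a < f b)
    {s : Finset β} (hs : ∀ a ∈ l, f a ∈ s) : l.length ≤ s.card := by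
  classical
  have hsorted : (l.map f).Pairwise (· < ·) :=
    (List.isChain_map f |>.2 (hl.imp fun a b h => hf a b h)).pairwise
  calc l.length = (l.map f).toFinset.card := by
        rw [List.toFinset_card_of_nodup hsorted.nodup, List.length_map]
    _ ≤ s.card := card_le_card fun b hb => by
        obtain ⟨a, ha, rfl⟩ := List.mem_map.1 (List.mem_toFinset.1 hb)
        exact hs a ha

section Slots

variable {T : Type*} [Fintype T]

def slot (σ : T → ℕ) (τ : ℕ) : Finset T := {t | σ t = τ}

variable {σ : T → ℕ} {M p : ℕ}

theorem card_le_mul_of_slot_card_le (hσ : ∀ t, σ t < M) (hcap : ∀ τ, (slot σ τ).card ≤ p) :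
    Fintype.card T ≤ p * M := by
  simpa using card_le_mul_card_image_of_maps_to (s := univ) (t := range M)
    (fun t _ => mem_range.2 (hσ t)) p fun τ _ => hcap τ

theorem sub_card_mul_add_card_le_card {C : Finset ℕ} (hσ : ∀ t, σ t < M)
    (hC : ∀ τ ∈ C, (slot σ τ).Nonempty)
    (hfull : ∀ τ < M, τ ∉ C → p ≤ (slot σ τ).card) :
    (M - C.card) * p + C.card ≤ Fintype.card T := by
  have hCM : C ⊆ range M := fun τ hτ => by
    obtain ⟨t, ht⟩ := hC τ hτ
    exact mem_range.2 ((mem_filter.1 ht).2 ▸ hσ t)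
  calc (M - C.card) * p + C.card
      = (range M \ C).card • p + C.card • 1 := by
        rw [card_sdiff_of_subset hCM, card_range, smul_eq_mul, smul_eq_mul, mul_one]
    _ ≤ ∑ τ ∈ range M \ C, (slot σ τ).card + ∑ τ ∈ C, (slot σ τ).card := by
        gcongr
        · exact card_nsmul_le_sum _ _ _ fun τ hτ => by
            rw [mem_sdiff, mem_range] at hτ
            exact hfull τ hτ.1 hτ.2
        · exact card_nsmul_le_sum _ _ _ fun τ hτ => card_pos.2 (hC τ hτ)
    _ = Fintype.card T := by
        rw [sum_sdiff hCM, ← card_univ]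
        exact (card_eq_sum_card_fiberwise fun t _ => mem_range.2 (hσ t)).symm

end Slots

section Greedy

variable {T : Type*} [Fintype T] {prec : T → T → Prop} {σ : T → ℕ} {p : ℕ}

theorem exists_chain_covering_idle_slots (hprec : ∀ a b, prec a b → σ a < σ b)
    (hgreedy : ∀ (τ : ℕ) (t : T), τ < σ t → (slot σ τ).card < p → ∃ s, prec s t ∧ τ ≤ σ s)
    (t : T) :
    ∃ l : List T, (t :: l).IsChain (flip prec) ∧
      ∀ τ ≤ σ t, (slot σ τ).card < p → ∃ s ∈ t :: l, σ s = τ := by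
  classical
  induction t using (measure σ).wf.induction with
  | h t ih =>
  by_cases hpred : ({s | prec s t} : Finset T).Nonempty
  · obtain ⟨s₀, hs₀, hlast⟩ := exists_max_image _ σ hpred
    have hs₀t : prec s₀ t := (mem_filter.1 hs₀).2
    obtain ⟨l, hchain, hcover⟩ := ih s₀ (hprec s₀ t hs₀t)
    refine ⟨s₀ :: l, List.isChain_cons_cons.2 ⟨hs₀t, hchain⟩, fun τ hτ hidle => ?_⟩
    rcases le_or_gt τ (σ s₀) with hle | hgt
    · obtain ⟨s, hs, rfl⟩ := hcover τ hle hidle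
      exact ⟨s, List.mem_cons_of_mem _ hs, rfl⟩
    rcases hτ.lt_or_eq with hlt | rfl
    · -- an idle slot before `t` would hold a predecessor of `t` later than `s₀`
      obtain ⟨s, hst, hτs⟩ := hgreedy τ t hlt hidle
      have := hlast s (mem_filter.2 ⟨mem_univ _, hst⟩)
      omega
    · exact ⟨t, List.mem_cons_self, rfl⟩
  · refine ⟨[], List.isChain_singleton t, fun τ hτ hidle => ?_⟩
    rcases hτ.lt_or_eq with hlt | rfl
    · obtain ⟨s, hst, -⟩ := hgreedy τ t hlt hidle
      exact (hpred ⟨s, mem_filter.2 ⟨mem_univ _, hst⟩⟩).elim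
    · exact ⟨t, List.mem_cons_self, rfl⟩

end Greedy

theorem graham_bounds_of_counts {n p c L M Mopt : ℕ} (hp : 0 < p)
    (hcount : (M - c) * p + c ≤ n) (hcL : c ≤ L) (hn : n ≤ p * Mopt) (hL : L ≤ Mopt) :
    M ≤ (n + p - 1) / p + L ∧ (n + p - 1) / p + L ≤ 2 * Mopt ∧
    (M : ℚ) ≤ (2 - 1 / (p : ℚ)) * (Mopt : ℚ) := by
  have hceil : (n + p - 1) / p ≤ Mopt := (Nat.div_le_iff_le_mul_add_pred hp).2 (by omega)
  refine ⟨?_, by omega, ?_⟩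
  · have : M - c ≤ n / p := (Nat.le_div_iff_mul_le hp).2 (by omega)
    have : n / p ≤ (n + p - 1) / p := Nat.div_le_div_right (by omega)
    omega
  · -- `M p ≤ n + c (p - 1) ≤ p Mopt + Mopt (p - 1)`
    have hMc : M * p + c ≤ n + c * p := by
      rw [Nat.sub_mul] at hcount
      omega
    have hp' : (0 : ℚ) < p := by exact_mod_cast hp
    have hp1 : (1 : ℚ) ≤ p := by exact_mod_cast hp
    have hMc' : (M : ℚ) * p + c ≤ n + c * p := by exact_mod_cast hMc
    have hn' : (n : ℚ) ≤ p * Mopt := by exact_mod_cast hn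
    have hc' : (c : ℚ) ≤ Mopt := by exact_mod_cast hcL.trans hL
    calc (M : ℚ) = M * p / p := by field_simp
      _ ≤ (2 * p - 1) * Mopt / p := div_le_div_of_nonneg_right
          (by nlinarith [mul_le_mul_of_nonneg_right hc' (sub_nonneg.2 hp1)]) hp'.le
      _ = (2 - 1 / (p : ℚ)) * Mopt := by field_simp

theorem graham_list_scheduling_general
    {T : Type*} [Fintype T] [Nonempty T]
    (prec : T → T → Prop)
    (p : ℕ) (hp : 0 < p)
    (Lc : ℕ)
    (hchain_le : ∀ l : List T, l.Chain' prec → l.length ≤ Lc)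
    (hchain_ex : ∃ l : List T, l.Chain' prec ∧ l.length = Lc)
    (σ σopt : T → ℕ)
    -- both schedules are valid
    (hprec : ∀ a b, prec a b → σ a < σ b)
    (hoptprec : ∀ a b, prec a b → σopt a < σopt b)
    (hoptcap : ∀ τ : ℕ, (Finset.univ.filter fun t => σopt t = τ).card ≤ p)
    -- the schedule σ is greedy: a processor is idle at time τ only if every
    -- not-yet-started task has a predecessor that has not completed by τ
    (hgreedy : ∀ (τ : ℕ) (t : T), τ < σ t →
      (Finset.univ.filter fun s => σ s = τ).card < p →
      ∃ s, prec s t ∧ τ ≤ σ s)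
    (M Mopt : ℕ)
    (hM : M = Finset.univ.sup σ + 1)
    (hMopt : Mopt = Finset.univ.sup σopt + 1) :
    M ≤ (Fintype.card T + p - 1) / p + Lc ∧
    (Fintype.card T + p - 1) / p + Lc ≤ 2 * Mopt ∧
    (M : ℚ) ≤ (2 - 1 / (p : ℚ)) * (Mopt : ℚ) := by
  have hσ : ∀ t, σ t < M := fun t => hM ▸ Nat.lt_succ_of_le (le_sup (mem_univ t))
  have hσopt : ∀ t, σopt t < Mopt := fun t => hMopt ▸ Nat.lt_succ_of_le (le_sup (mem_univ t))
  obtain ⟨tlast, -, htlast⟩ := exists_mem_eq_sup univ univ_nonempty σ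
  obtain ⟨l, hchain, hcover⟩ := exists_chain_covering_idle_slots hprec hgreedy tlast
  have hchain' : (tlast :: l).reverse.IsChain prec := List.isChain_reverse.2 hchain
  set C := ((tlast :: l).map σ).toFinset
  have hCL : C.card ≤ Lc :=
    (List.toFinset_card_le _).trans (by simpa using hchain_le _ hchain')
  have hcount : (M - C.card) * p + C.card ≤ Fintype.card T := by
    refine sub_card_mul_add_card_le_card hσ (fun τ hτ => ?_) (fun τ hτM hτC => ?_)
    · obtain ⟨s, -, rfl⟩ := List.mem_map.1 (List.mem_toFinset.1 hτ)
      exact ⟨s, mem_filter.2 ⟨mem_univ s, rfl⟩⟩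
    · by_contra! hidle
      exact hτC (List.mem_toFinset.2 (List.mem_map.2 (hcover τ (by omega) hidle)))
  have hLc : Lc ≤ Mopt := by
    obtain ⟨l, hl, rfl⟩ := hchain_ex
    simpa using List.IsChain.length_le_card_of_lt hl hoptprec (s := range Mopt)
      fun a _ => mem_range.2 (hσopt a)
  exact graham_bounds_of_counts hp hcount hCL (card_le_mul_of_slot_card_le hσopt hoptcap) hLc

/-- Graham's list-scheduling bound for unit-time tasks. Tasks form a DAG given
by a strict order `prec`; a schedule assigns each task a unit time slot,
respecting precedence and running at most `p` tasks per slot. A greedy (list)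
schedule never leaves a processor idle while some task has all its predecessors
completed. If every precedence chain has length at most `Lc` (and some chain
attains `Lc`), then the greedy makespan `M` satisfies
`M ≤ ⌈n/p⌉ + Lc ≤ 2·OPT` and more precisely `M ≤ (2 − 1/p)·OPT`, for the
makespan `Mopt` of any valid (in particular an optimal) schedule. -/
theorem graham_list_scheduling
    {T : Type*} [Fintype T] [DecidableEq T] [Nonempty T]
    (prec : T → T → Prop) (htrans : Transitive prec) (hirrefl : Irreflexive prec)
    (p : ℕ) (hp : 0 < p)
    (Lc : ℕ)
    (hchain_le : ∀ l : List T, l.Chain' prec → l.length ≤ Lc)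
    (hchain_ex : ∃ l : List T, l.Chain' prec ∧ l.length = Lc)
    (σ σopt : T → ℕ)
    -- both schedules are valid
    (hprec : ∀ a b, prec a b → σ a < σ b)
    (hcap : ∀ τ : ℕ, (Finset.univ.filter fun t => σ t = τ).card ≤ p)
    (hoptprec : ∀ a b, prec a b → σopt a < σopt b)
    (hoptcap : ∀ τ : ℕ, (Finset.univ.filter fun t => σopt t = τ).card ≤ p)
    -- the schedule σ is greedy: a processor is idle at time τ only if every
    -- not-yet-started task has a predecessor that has not completed by τ
    (hgreedy : ∀ (τ : ℕ) (t : T), τ < σ t →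
      (Finset.univ.filter fun s => σ s = τ).card < p →
      ∃ s, prec s t ∧ τ ≤ σ s)
    (M Mopt : ℕ)
    (hM : M = Finset.univ.sup σ + 1)
    (hMopt : Mopt = Finset.univ.sup σopt + 1) :
    M ≤ (Fintype.card T + p - 1) / p + Lc ∧
    (Fintype.card T + p - 1) / p + Lc ≤ 2 * Mopt ∧
    (M : ℚ) ≤ (2 - 1 / (p : ℚ)) * (Mopt : ℚ) :=
  graham_list_scheduling_general prec p hp Lc hchain_le hchain_ex σ σopt hprec hoptprec hoptcap
    hgreedy M Mopt hM hMopt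
end

section
/- If the synchronous update operator on the full state vector is a contraction with factor γ < 1 in the sup norm, then any fair asynchronous (Gauss–Seidel style) execution—in which each coordinate is updated infinitely often using the most recent values of the other coordinates—converges to the unique fixed point. -/
/-!
Let `z` be the fixed point of `F` and `d t` the sup-distance from the `t`-th iterate to `z`.
Every single-coordinate update moves that coordinate to within `γ * d t ≤ d t` of `z`, so `d`
is nonincreasing. Once every coordinate has been updated after time `s`, which fairness guarantees,
each coordinate stays within `γ * d s` of `z` for ever after, so eventually `d ≤ γ * d s`. Hence the
limit `L` of `d` satisfies `L ≤ γ * L`, which forces `L = 0`.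
-/

open Filter Topology

section Async

variable {ι : Type*} [DecidableEq ι] {α : ι → Type*} [∀ i, PseudoMetricSpace (α i)]

def IsAsyncIteration (F : (∀ i, α i) → ∀ i, α i) (idx : ℕ → ι) (x : ℕ → ∀ i, α i) : Prop :=
  ∀ t, x (t + 1) = Function.update (x t) (idx t) (F (x t) (idx t))

namespace IsAsyncIteration

variable [Fintype ι] {F : (∀ i, α i) → ∀ i, α i} {idx : ℕ → ι} {x : ℕ → ∀ i, α i}
  {z : ∀ i, α i} {γ : ℝ}

theorem dist_succ_le (hx : IsAsyncIteration F idx x)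
    (hF : ∀ y i, dist (F y i) (z i) ≤ γ * dist y z) (hγ1 : γ ≤ 1) (t : ℕ) :
    dist (x (t + 1)) z ≤ dist (x t) z := by
  refine (dist_pi_le_iff dist_nonneg).2 fun i => ?_
  rw [hx]
  rcases eq_or_ne i (idx t) with rfl | hi
  · rw [Function.update_self]
    exact (hF _ _).trans (mul_le_of_le_one_left dist_nonneg hγ1)
  · rw [Function.update_of_ne hi]
    exact dist_le_pi_dist _ _ i

theorem antitone_dist (hx : IsAsyncIteration F idx x)
    (hF : ∀ y i, dist (F y i) (z i) ≤ γ * dist y z) (hγ1 : γ ≤ 1) :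
    Antitone fun t => dist (x t) z :=
  antitone_nat_of_succ_le (hx.dist_succ_le hF hγ1)

theorem dist_apply_le_of_lt (hx : IsAsyncIteration F idx x)
    (hF : ∀ y i, dist (F y i) (z i) ≤ γ * dist y z) (hγ0 : 0 ≤ γ) (hγ1 : γ ≤ 1)
    {s u t : ℕ} (hsu : s ≤ u) (hut : u < t) :
    dist (x t (idx u)) (z (idx u)) ≤ γ * dist (x s) z := by
  have hanti := hx.antitone_dist hF hγ1
  have hupdate : ∀ r, s ≤ r → dist (F (x r) (idx u)) (z (idx u)) ≤ γ * dist (x s) z :=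
    fun r hr => (hF _ _).trans (mul_le_mul_of_nonneg_left (hanti hr) hγ0)
  induction t, hut using Nat.le_induction with
  | base => simpa [hx u] using hupdate u hsu
  | succ t hut ih =>
    rw [hx]
    rcases eq_or_ne (idx u) (idx t) with h | h
    · rw [h, Function.update_self, ← h]
      exact hupdate t (hsu.trans (Nat.le_of_succ_le hut))
    · rwa [Function.update_of_ne h]

theorem eventually_dist_le_mul (hx : IsAsyncIteration F idx x)
    (hF : ∀ y i, dist (F y i) (z i) ≤ γ * dist y z) (hγ0 : 0 ≤ γ) (hγ1 : γ ≤ 1)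
    (hfair : ∀ i, ∃ᶠ t in atTop, idx t = i) (s : ℕ) :
    ∀ᶠ t in atTop, dist (x t) z ≤ γ * dist (x s) z := by
  have hcoord : ∀ i, ∀ᶠ t in atTop, dist (x t i) (z i) ≤ γ * dist (x s) z := fun i => by
    obtain ⟨u, hsu, rfl⟩ := frequently_atTop.1 (hfair i) s
    exact eventually_atTop.2 ⟨u + 1, fun t ht => hx.dist_apply_le_of_lt hF hγ0 hγ1 hsu ht⟩
  filter_upwards [eventually_all.2 hcoord] with t ht
  exact (dist_pi_le_iff (mul_nonneg hγ0 dist_nonneg)).2 ht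

theorem tendsto (hx : IsAsyncIteration F idx x)
    (hF : ∀ y i, dist (F y i) (z i) ≤ γ * dist y z) (hγ0 : 0 ≤ γ) (hγ1 : γ < 1)
    (hfair : ∀ i, ∃ᶠ t in atTop, idx t = i) :
    Tendsto x atTop (𝓝 z) := by
  have hanti := hx.antitone_dist hF hγ1.le
  obtain ⟨L, hL⟩ : ∃ L, Tendsto (fun t => dist (x t) z) atTop (𝓝 L) :=
    ⟨_, tendsto_atTop_ciInf hanti ⟨0, by rintro _ ⟨t, rfl⟩; exact dist_nonneg⟩⟩
  have hL0 : 0 ≤ L := ge_of_tendsto' hL fun _ => dist_nonneg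
  have hLγ : L ≤ γ * L := by
    refine ge_of_tendsto' (hL.const_mul γ) fun s => ?_
    obtain ⟨t, ht⟩ := (hx.eventually_dist_le_mul hF hγ0 hγ1.le hfair s).exists
    exact (hanti.le_of_tendsto hL t).trans ht
  obtain rfl : L = 0 := by nlinarith
  exact tendsto_iff_dist_tendsto_zero.2 hL

end IsAsyncIteration

end Async

theorem Pi.contractingWith_of_dist_apply_le {ι : Type*} [Fintype ι] {α : ι → Type*}
    [∀ i, MetricSpace (α i)] {F : (∀ i, α i) → ∀ i, α i} {K : NNReal} (hK : K < 1)
    (hF : ∀ x y i, dist (F x i) (F y i) ≤ K * dist x y) : ContractingWith K F :=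
  ⟨hK, LipschitzWith.of_dist_le_mul fun x y => (dist_pi_le_iff (by positivity)).2 (hF x y)⟩

theorem iSup_abs_sub_le_dist {ι : Type*} [Fintype ι] (x y : ι → ℝ) :
    ⨆ j, |x j - y j| ≤ dist x y :=
  Real.iSup_le (fun j => by simpa [Real.dist_eq] using dist_le_pi_dist x y j) dist_nonneg

theorem async_execution_converges_general
    {n : ℕ}
    (F : (Fin n → ℝ) → (Fin n → ℝ))
    (γ : ℝ) (hγ0 : 0 ≤ γ) (hγ1 : γ < 1)
    (hcontr : ∀ x y : Fin n → ℝ, ∀ i : Fin n,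
      |F x i - F y i| ≤ γ * ⨆ j, |x j - y j|)
    (idx : ℕ → Fin n)
    (hfair : ∀ i : Fin n, ∀ N : ℕ, ∃ t ≥ N, idx t = i)
    (x : ℕ → Fin n → ℝ)
    (hx : ∀ t, x (t + 1) = Function.update (x t) (idx t) (F (x t) (idx t))) :
    ∃ xstar : Fin n → ℝ, F xstar = xstar ∧ (∀ y, F y = y → y = xstar) ∧
      Tendsto x atTop (nhds xstar) := by
  have hF : ∀ y w i, dist (F y i) (F w i) ≤ γ * dist y w := fun y w i =>
    (hcontr y w i).trans (mul_le_mul_of_nonneg_left (iSup_abs_sub_le_dist y w) hγ0)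
  have hK : ContractingWith γ.toNNReal F :=
    Pi.contractingWith_of_dist_apply_le (Real.toNNReal_lt_one.2 hγ1)
      (by simpa only [Real.coe_toNNReal γ hγ0] using hF)
  obtain ⟨xstar, hfix, -⟩ := hK.exists_fixedPoint 0 (edist_ne_top _ _)
  refine ⟨xstar, hfix, fun y hy => hK.fixedPoint_unique' hy hfix, ?_⟩
  exact IsAsyncIteration.tendsto hx (fun y i => by simpa only [hfix.eq] using hF y xstar i)
    hγ0 hγ1 fun i => frequently_atTop.2 (hfair i)

/-- If the synchronous update operator `F` is a sup-norm contraction with factor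
`γ < 1`, then any fair asynchronous (Gauss–Seidel style) execution — in which
each coordinate is updated infinitely often using the most recent values of the
other coordinates — converges to the unique fixed point of `F`. -/
theorem async_execution_converges
    {n : ℕ} (hn : 0 < n)
    (F : (Fin n → ℝ) → (Fin n → ℝ))
    (γ : ℝ) (hγ0 : 0 ≤ γ) (hγ1 : γ < 1)
    (hcontr : ∀ x y : Fin n → ℝ, ∀ i : Fin n,
      |F x i - F y i| ≤ γ * ⨆ j, |x j - y j|)
    (idx : ℕ → Fin n)
    (hfair : ∀ i : Fin n, ∀ N : ℕ, ∃ t ≥ N, idx t = i)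
    (x : ℕ → Fin n → ℝ)
    (hx : ∀ t, x (t + 1) = Function.update (x t) (idx t) (F (x t) (idx t))) :
    ∃ xstar : Fin n → ℝ, F xstar = xstar ∧ (∀ y, F y = y → y = xstar) ∧
      Tendsto x atTop (nhds xstar) :=
  async_execution_converges_general F γ hγ0 hγ1 hcontr idx hfair x hx
end
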